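/- arXiv:1307.5252 — 2 statements merged into one kernel-verified Lean document; each statement's English description precedes it below -/
import Mathlib

section
/- Let c be an extreme cycle in a graph E and H = \tilde{c}^0 = T(c^0). Then in the quotient graph construction _H E: (a) every vertex of _H E connects to a cycle, (b) every cycle in _H E has an exit, and (c) the only hereditary and saturated subsets of (_H E)^0 are ∅ and (_H E)^0. -/
/-- A directed graph. -/
structure DGraph (V E : Type) where
  s : E → V
  r : E → V

namespace DGraph

variable {V E : Type}

/-- Paths in a directed graph. -/
inductive GPath (G : DGraph V E) : V → V → Type
  | nil (v : V) : GPath G v v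
  | cons (e : E) {w : V} (p : GPath G (G.r e) w) : GPath G (G.s e) w

namespace GPath

variable {G : DGraph V E}

/-- The length of a path. -/
def length : ∀ {u v : V}, GPath G u v → ℕ
  | _, _, .nil _ => 0
  | _, _, .cons _ p => p.length + 1

/-- The list of edges of a path. -/
def edges : ∀ {u v : V}, GPath G u v → List E
  | _, _, .nil _ => []
  | _, _, .cons e p => e :: p.edges

/-- The list of vertices of a path. -/
def vertices : ∀ {u v : V}, GPath G u v → List V
  | _, _, .nil w => [w]
  | _, _, .cons e p => G.s e :: p.vertices

end GPath

variable (G : DGraph V E)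

/-- `u` connects to `v` (there is a path from `u` to `v`). -/
def Reach (u v : V) : Prop := Nonempty (G.GPath u v)

/-- A subset of vertices is hereditary if it is closed under ranges of paths
starting in it. -/
def Hereditary (H : Set V) : Prop := ∀ ⦃u v : V⦄, G.Reach u v → u ∈ H → v ∈ H

/-- A regular vertex: it emits a finite nonzero number of edges. -/
def Regular (v : V) : Prop := {e : E | G.s e = v}.Finite ∧ ∃ e : E, G.s e = v

/-- The tower `Λ_m(H)` building the saturated closure: `Λ_0(H) = H` and
`Λ_{m+1}(H) = Λ_m(H) ∪ {v regular | r(s⁻¹(v)) ⊆ Λ_m(H)}`. -/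
def Lam (H : Set V) : ℕ → Set V
  | 0 => H
  | m + 1 => Lam H m ∪ {v : V | G.Regular v ∧ ∀ e : E, G.s e = v → G.r e ∈ Lam H m}

/-- The saturated closure of `H`: the union of the `Λ_m(H)`. -/
def satClosure (H : Set V) : Set V := ⋃ m : ℕ, G.Lam H m

/-- The tree of a set of vertices: all vertices reachable from it. -/
def Tree (X : Set V) : Set V := {w : V | ∃ v ∈ X, G.Reach v w}

/-- A set of vertices is saturated. -/
def Saturated (H : Set V) : Prop :=
  ∀ v : V, G.Regular v → (∀ e : E, G.s e = v → G.r e ∈ H) → v ∈ H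

/-- A cycle based at `v`: a nontrivial closed path whose edges have pairwise
distinct sources. -/
def IsCycle {v : V} (p : G.GPath v v) : Prop :=
  0 < p.length ∧ (p.edges.map G.s).Nodup

/-- An exit for a path: an edge starting at one of its vertices but not
belonging to the path. -/
def HasExit {u v : V} (p : G.GPath u v) : Prop :=
  ∃ e : E, G.s e ∈ p.edges.map G.s ∧ e ∉ p.edges

/-- An extreme cycle: a cycle with an exit such that every vertex reachable from
the cycle connects back to the cycle. -/
def IsExtreme {v : V} (p : G.GPath v v) : Prop :=
  G.IsCycle p ∧ G.HasExit p ∧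
    ∀ w ∈ p.vertices, ∀ x : V, G.Reach w x → ∃ y ∈ p.vertices, G.Reach x y

/-- There is a bifurcation at `w`. -/
def Bifurcation (w : V) : Prop := ∃ e f : E, e ≠ f ∧ G.s e = w ∧ G.s f = w

/-- `w` lies on a cycle. -/
def OnCycle (w : V) : Prop := ∃ p : G.GPath w w, G.IsCycle p

/-- A line point: no bifurcations and no cycles in its tree. -/
def IsLinePoint (v : V) : Prop :=
  ∀ w : V, G.Reach v w → ¬G.Bifurcation w ∧ ¬G.OnCycle w

/-- The set of line points `P_l`. -/
def Pl : Set V := {v : V | G.IsLinePoint v}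

/-- The set `P_c` of vertices lying on cycles without exits. -/
def Pc : Set V :=
  {v : V | ∃ (u : V) (p : G.GPath u u), G.IsCycle p ∧ ¬G.HasExit p ∧ v ∈ p.vertices}

/-- The set `P_ec` of vertices lying on extreme cycles. -/
def Pec : Set V :=
  {v : V | ∃ (u : V) (p : G.GPath u u), G.IsExtreme p ∧ v ∈ p.vertices}

/-- The relation `∼¹`: `u ∼¹ v` iff `u = v`, or one reaches the other with no
bifurcations in their trees, or both are reachable from a common vertex on a
cycle. -/
def SimOne (u v : V) : Prop :=
  u = v ∨
    ((G.Reach u v ∨ G.Reach v u) ∧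
      ∀ w : V, (G.Reach u w ∨ G.Reach v w) → ¬G.Bifurcation w) ∨
    ∃ w : V, G.OnCycle w ∧ G.Reach w u ∧ G.Reach w v

/-- The relation `∼`: the transitive closure of `∼¹`. -/
def Sim : V → V → Prop := Relation.TransGen G.SimOne

/-- The equivalence class `[u]` of a vertex under `∼`. -/
def classOf (u : V) : Set V := {v : V | G.Sim u v}

/-- The set `F_E(H)` of paths entering `H` minimally: all vertices but the last
one lie outside `H`, and the last one lies in `H`. -/
structure FEnter (G : DGraph V E) (H : Set V) where
  src : V
  tgt : V
  path : G.GPath src tgt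
  length_pos : 0 < path.length
  tgt_mem : tgt ∈ H
  not_mem : ∀ w ∈ path.vertices.dropLast, w ∉ H

/-- The quotient graph `_H E` associated to a hereditary set `H`. -/
def quotGraph (H : Set V) (hH : ∀ e : E, G.s e ∈ H → G.r e ∈ H) :
    DGraph (H ⊕ G.FEnter H) ({e : E // G.s e ∈ H} ⊕ G.FEnter H) where
  s := fun x => match x with
    | .inl e => .inl ⟨G.s e.1, e.2⟩
    | .inr α => .inr α
  r := fun x => match x with
    | .inl e => .inl ⟨G.r e.1, hH e.1 e.2⟩
    | .inr α => .inl ⟨α.tgt, α.tgt_mem⟩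

end DGraph

/-!
The vertices of `H = T(c^0)` all reach the base of `c` (because `c` is extreme) and are all reached
from it, so `H` is strongly connected. In `_H E` the vertices of `H` span a copy of the
restriction of `E` to `H`, and each new vertex `α ∈ F_E(H)` emits exactly one edge, into `H`.
Hence every vertex of `_H E` reaches every vertex of `H`, which contains the cycle `c`; a nonempty
hereditary set contains all of `H` and then, by saturation, every `α`. The new vertices are
sources, so a cycle of `_H E` lies in `H` and reaches the bifurcation at the exit of `c`, which a
cycle without exits cannot do.
-/

namespace DGraph

variable {V E : Type} {G : DGraph V E}

def GPath.comp : ∀ {a b c : V}, G.GPath a b → G.GPath b c → G.GPath a c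
  | _, _, _, .nil _, p => p
  | _, _, _, .cons e q, p => .cons e (q.comp p)

theorem Reach.refl (u : V) : G.Reach u u := ⟨.nil u⟩

theorem Reach.trans {a b c : V} (h₁ : G.Reach a b) (h₂ : G.Reach b c) : G.Reach a c :=
  ⟨h₁.some.comp h₂.some⟩

namespace GPath

theorem vertices_eq : ∀ {a b : V} (p : G.GPath a b), p.vertices = p.edges.map G.s ++ [b]
  | _, _, .nil _ => rfl
  | _, _, .cons e p => by simp [vertices, edges, vertices_eq p]

theorem mem_vertices_of_mem_sources {a b x : V} (p : G.GPath a b)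
    (hx : x ∈ p.edges.map G.s) : x ∈ p.vertices := by
  rw [vertices_eq]
  exact List.mem_append_left _ hx

theorem start_mem_vertices : ∀ {a b : V} (p : G.GPath a b), a ∈ p.vertices
  | _, _, .nil _ => List.mem_singleton_self _
  | _, _, .cons _ _ => List.mem_cons_self

theorem start_mem_sources : ∀ {a b : V} (p : G.GPath a b), 0 < p.length → a ∈ p.edges.map G.s
  | _, _, .nil _, h => absurd h (lt_irrefl 0)
  | _, _, .cons _ _, _ => List.mem_cons_self

theorem r_mem_vertices : ∀ {a b : V} (p : G.GPath a b) {f : E}, f ∈ p.edges → G.r f ∈ p.vertices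
  | _, _, .nil _, _, hf => absurd hf List.not_mem_nil
  | _, _, .cons _ p, _, hf => by
      rcases List.mem_cons.1 hf with rfl | hf
      · exact List.mem_cons_of_mem _ p.start_mem_vertices
      · exact List.mem_cons_of_mem _ (p.r_mem_vertices hf)

theorem reach_of_mem_vertices : ∀ {a b : V} (p : G.GPath a b) {w : V}, w ∈ p.vertices →
    G.Reach a w ∧ G.Reach w b
  | _, _, .nil _, _, hw => by
      obtain rfl := List.mem_singleton.1 hw
      exact ⟨.refl _, .refl _⟩
  | _, _, .cons e p, _, hw => by
      rcases List.mem_cons.1 hw with rfl | hw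
      · exact ⟨.refl _, ⟨.cons e p⟩⟩
      · obtain ⟨h₁, h₂⟩ := p.reach_of_mem_vertices hw
        exact ⟨⟨.cons e h₁.some⟩, h₂⟩

theorem exists_r_eq_of_length_pos {a b : V} (p : G.GPath a b) (hp : 0 < p.length) :
    ∃ e : E, G.r e = b := by
  have key : ∀ {a : V} (p : G.GPath a b), (∃ e : E, G.r e = b) ∨ a = b ∧ p.length = 0 := by
    intro a q
    clear p hp
    induction q with
    | nil => exact .inr ⟨rfl, rfl⟩
    | cons e _ ih => exact .inl (ih.elim id fun h => ⟨e, h.1⟩)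
  exact (key p).resolve_right fun h => hp.ne' h.2

end GPath

theorem HasExit.exists_bifurcation {a b : V} {p : G.GPath a b} (h : G.HasExit p) :
    ∃ x ∈ p.vertices, G.Bifurcation x := by
  obtain ⟨f, hf, hfp⟩ := h
  obtain ⟨g, hg, hgf⟩ := List.mem_map.1 hf
  exact ⟨G.s f, p.mem_vertices_of_mem_sources hf, f, g, fun h => hfp (h ▸ hg), rfl, hgf⟩

section NoExit

variable {w : V} {p : G.GPath w w}

theorem mem_sources_of_reach_of_not_hasExit (hlen : 0 < p.length) (hp : ¬G.HasExit p) :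
    ∀ {a b : V}, G.GPath a b → a ∈ p.edges.map G.s → b ∈ p.edges.map G.s
  | _, _, .nil _, ha => ha
  | _, _, .cons f ρ, ha => by
      have hf : f ∈ p.edges := by_contra fun hf => hp ⟨f, ha, hf⟩
      refine mem_sources_of_reach_of_not_hasExit hlen hp ρ ?_
      rcases List.mem_append.1 (p.vertices_eq ▸ p.r_mem_vertices hf) with hr | hr
      · exact hr
      · exact List.mem_singleton.1 hr ▸ p.start_mem_sources hlen

theorem IsCycle.hasExit_of_reach_bifurcation (hp : G.IsCycle p) {x : V} (hx : G.Reach w x)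
    (hbif : G.Bifurcation x) : G.HasExit p := by
  by_contra hne
  obtain ⟨e, f, hef, rfl, hfe⟩ := hbif
  have hsrc := mem_sources_of_reach_of_not_hasExit hp.1 hne hx.some (p.start_mem_sources hp.1)
  have mem_edges : ∀ g : E, G.s g = G.s e → g ∈ p.edges := fun g hg =>
    by_contra fun hgp => hne ⟨g, hg ▸ hsrc, hgp⟩
  exact hef (List.inj_on_of_nodup_map hp.2 (mem_edges e rfl) (mem_edges f hfe) hfe.symm)

end NoExit

theorem mem_of_gpath {H : Set V} (hH : ∀ e : E, G.s e ∈ H → G.r e ∈ H) :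
    ∀ {u z : V}, G.GPath u z → u ∈ H → z ∈ H
  | _, _, .nil _, h => h
  | _, _, .cons e p, h => mem_of_gpath hH p (hH e h)

section QuotGraph

variable {H : Set V} (hH : ∀ e : E, G.s e ∈ H → G.r e ∈ H)

def liftPath : ∀ {u z : V} (q : G.GPath u z) (hu : u ∈ H),
    (G.quotGraph H hH).GPath (.inl ⟨u, hu⟩) (.inl ⟨z, mem_of_gpath hH q hu⟩)
  | _, _, .nil w, hu => .nil (Sum.inl (⟨w, hu⟩ : H))
  | _, _, .cons e p, hu => .cons (Sum.inl (⟨e, hu⟩ : {e : E // G.s e ∈ H})) (liftPath p (hH e hu))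

theorem length_liftPath : ∀ {u z : V} (q : G.GPath u z) (hu : u ∈ H),
    (liftPath hH q hu).length = q.length
  | _, _, .nil _, _ => rfl
  | _, _, .cons e p, hu => by
      simp only [liftPath, GPath.length]
      exact congrArg (· + 1) (length_liftPath p (hH e hu))

theorem map_s_edges_liftPath : ∀ {u z : V} (q : G.GPath u z) (hu : u ∈ H),
    ((liftPath hH q hu).edges.map (G.quotGraph H hH).s).map (Sum.elim Subtype.val FEnter.src) =
      q.edges.map G.s
  | _, _, .nil _, _ => by simp [liftPath, GPath.edges]
  | _, _, .cons e p, hu => by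
      simpa [liftPath, GPath.edges, quotGraph] using map_s_edges_liftPath p (hH e hu)

theorem isCycle_liftPath {u : V} {q : G.GPath u u} (hq : G.IsCycle q) (hu : u ∈ H) :
    (G.quotGraph H hH).IsCycle (liftPath hH q hu) :=
  ⟨length_liftPath hH q hu ▸ hq.1, (map_s_edges_liftPath hH q hu ▸ hq.2).of_map _⟩

theorem quotGraph_reach_inl {u z : V} (hu : u ∈ H) (hz : z ∈ H) (h : G.Reach u z) :
    (G.quotGraph H hH).Reach (.inl ⟨u, hu⟩) (.inl ⟨z, hz⟩) :=
  ⟨liftPath hH h.some hu⟩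

theorem quotGraph_bifurcation_inl {x : V} (hx : x ∈ H) (h : G.Bifurcation x) :
    (G.quotGraph H hH).Bifurcation (.inl ⟨x, hx⟩) := by
  obtain ⟨e, f, hef, rfl, hf⟩ := h
  exact ⟨.inl ⟨e, hx⟩, .inl ⟨f, hf ▸ hx⟩,
    fun h => hef (congrArg Subtype.val (Sum.inl_injective h)), rfl,
    congrArg Sum.inl (Subtype.ext hf)⟩

theorem quotGraph_s_eq_inr_iff {ε : {e : E // G.s e ∈ H} ⊕ G.FEnter H} {α : G.FEnter H} :
    (G.quotGraph H hH).s ε = .inr α ↔ ε = .inr α := by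
  cases ε <;> simp [quotGraph]

theorem quotGraph_regular_inr (α : G.FEnter H) : (G.quotGraph H hH).Regular (.inr α) :=
  ⟨(Set.finite_singleton (Sum.inr α)).subset fun _ hε => (quotGraph_s_eq_inr_iff hH).1 hε,
    Sum.inr α, rfl⟩

theorem quotGraph_r_ne_inr (ε : {e : E // G.s e ∈ H} ⊕ G.FEnter H) (α : G.FEnter H) :
    (G.quotGraph H hH).r ε ≠ .inr α := by
  cases ε <;> simp [quotGraph]

theorem quotGraph_exists_reach_inl (x : H ⊕ G.FEnter H) :
    ∃ u : H, (G.quotGraph H hH).Reach x (.inl u) := by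
  rcases x with u | α
  · exact ⟨u, .refl _⟩
  · exact ⟨⟨α.tgt, α.tgt_mem⟩, ⟨.cons (Sum.inr α) (.nil _)⟩⟩

variable {hH} (hconn : ∀ u ∈ H, ∀ w ∈ H, G.Reach u w)
include hconn

theorem quotGraph_reach_inl_of_stronglyConnected (x : H ⊕ G.FEnter H) (w : H) :
    (G.quotGraph H hH).Reach x (.inl w) := by
  obtain ⟨u, hxu⟩ := quotGraph_exists_reach_inl hH x
  exact hxu.trans (quotGraph_reach_inl hH u.2 w.2 (hconn u u.2 w w.2))

theorem quotGraph_exists_isCycle_reach {v : V} (hv : v ∈ H) {c : G.GPath v v}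
    (hc : G.IsCycle c) (x : H ⊕ G.FEnter H) :
    ∃ (w : H ⊕ G.FEnter H) (p : (G.quotGraph H hH).GPath w w),
      (G.quotGraph H hH).IsCycle p ∧ (G.quotGraph H hH).Reach x w :=
  ⟨_, liftPath hH c hv, isCycle_liftPath hH hc hv,
    quotGraph_reach_inl_of_stronglyConnected hconn x ⟨v, hv⟩⟩

theorem quotGraph_hasExit {x : V} (hx : x ∈ H) (hbif : G.Bifurcation x)
    {w : H ⊕ G.FEnter H} {p : (G.quotGraph H hH).GPath w w}
    (hp : (G.quotGraph H hH).IsCycle p) : (G.quotGraph H hH).HasExit p := by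
  rcases w with u | α
  · exact hp.hasExit_of_reach_bifurcation
      (quotGraph_reach_inl_of_stronglyConnected hconn _ ⟨x, hx⟩)
      (quotGraph_bifurcation_inl hH hx hbif)
  · obtain ⟨ε, hε⟩ := p.exists_r_eq_of_length_pos hp.1
    exact absurd hε (quotGraph_r_ne_inr hH ε α)

theorem quotGraph_eq_empty_or_univ {H' : Set (H ⊕ G.FEnter H)}
    (hher : (G.quotGraph H hH).Hereditary H') (hsat : (G.quotGraph H hH).Saturated H') :
    H' = ∅ ∨ H' = Set.univ := by
  refine H'.eq_empty_or_nonempty.imp id fun ⟨x, hx⟩ => ?_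
  have hinl : ∀ u : H, Sum.inl u ∈ H' := fun u =>
    hher (quotGraph_reach_inl_of_stronglyConnected hconn x u) hx
  refine Set.eq_univ_of_forall fun y => ?_
  rcases y with u | α
  · exact hinl u
  · refine hsat _ (quotGraph_regular_inr hH α) fun ε hε => ?_
    obtain rfl := (quotGraph_s_eq_inr_iff hH).1 hε
    exact hinl _

end QuotGraph

theorem IsExtreme.reach_of_mem_tree {v : V} {c : G.GPath v v} (hc : G.IsExtreme c) {u : V}
    (hu : u ∈ G.Tree {x | x ∈ c.vertices}) : G.Reach u v := by
  obtain ⟨y₀, hy₀, hy₀u⟩ := hu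
  obtain ⟨y, hy, huy⟩ := hc.2.2 y₀ hy₀ u hy₀u
  exact huy.trans (c.reach_of_mem_vertices hy).2

theorem reach_of_mem_tree {v w : V} {c : G.GPath v w} {u : V}
    (hu : u ∈ G.Tree {x | x ∈ c.vertices}) : G.Reach v u := by
  obtain ⟨y, hy, hyu⟩ := hu
  exact (c.reach_of_mem_vertices hy).1.trans hyu

end DGraph

/-- for an extreme cycle `c` and `H = T(c^0)`, in the quotient
graph `_H E`: (a) every vertex connects to a cycle, (b) every cycle has an
exit, (c) the only hereditary saturated subsets are `∅` and everything. -/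
theorem quotGraph_of_extreme_cycle {V E : Type} (G : DGraph V E) {v : V}
    (c : G.GPath v v) (hc : G.IsExtreme c) (H : Set V)
    (hHdef : H = G.Tree {x : V | x ∈ c.vertices})
    (hH : ∀ e : E, G.s e ∈ H → G.r e ∈ H) :
    (∀ x : ↥H ⊕ G.FEnter H, ∃ (w : ↥H ⊕ G.FEnter H)
        (p : (G.quotGraph H hH).GPath w w),
        (G.quotGraph H hH).IsCycle p ∧ (G.quotGraph H hH).Reach x w) ∧
    (∀ (w : ↥H ⊕ G.FEnter H) (p : (G.quotGraph H hH).GPath w w),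
        (G.quotGraph H hH).IsCycle p → (G.quotGraph H hH).HasExit p) ∧
    (∀ H' : Set (↥H ⊕ G.FEnter H), (G.quotGraph H hH).Hereditary H' →
        (G.quotGraph H hH).Saturated H' → H' = ∅ ∨ H' = Set.univ) := by
  subst hHdef
  have hmem : ∀ y ∈ c.vertices, y ∈ G.Tree {x | x ∈ c.vertices} := fun y hy =>
    ⟨y, hy, .refl y⟩
  have hconn : ∀ u ∈ G.Tree {x | x ∈ c.vertices}, ∀ w ∈ G.Tree {x | x ∈ c.vertices},
      G.Reach u w := fun u hu w hw =>
    (hc.reach_of_mem_tree hu).trans (DGraph.reach_of_mem_tree hw)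
  obtain ⟨x, hx, hbif⟩ := hc.2.1.exists_bifurcation
  exact ⟨DGraph.quotGraph_exists_isCycle_reach hconn (hmem v c.start_mem_vertices) hc.1,
    fun _ _ => DGraph.quotGraph_hasExit hconn (hmem x hx) hbif,
    fun _ => DGraph.quotGraph_eq_empty_or_univ hconn⟩
end

section
/- Let E be an arbitrary graph and let u, v ∈ P = P_l ∪ P_c ∪ P_{ec}, and let ∼ be the connection equivalence relation on P. Then the equivalence class [u] is a hereditary subset of E^0; and if u ≁ v then the saturated closures of [u] and [v] are disjoint. -/
namespace DGraph

variable {V E : Type} {G : DGraph V E}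

/-- Concatenation of paths. -/
def GPath.append : ∀ {a b c : V}, GPath G a b → GPath G b c → GPath G a c
  | _, _, _, .nil _, q => q
  | _, _, _, .cons e p, q => .cons e (p.append q)

lemma reach_refl (a : V) : G.Reach a a := ⟨.nil a⟩

lemma reach_trans {a b c : V} (h1 : G.Reach a b) (h2 : G.Reach b c) : G.Reach a c :=
  h1.elim fun p => h2.elim fun q => ⟨p.append q⟩

lemma reach_of_mem_vertices :
    ∀ {a b : V} (p : G.GPath a b) {w : V}, w ∈ p.vertices → G.Reach a w
  | _, _, .nil v, w, hw => by
      simp [GPath.vertices] at hw; subst hw; exact reach_refl _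
  | _, _, .cons e p, w, hw => by
      simp [GPath.vertices] at hw
      rcases hw with h | h
      · subst h; exact reach_refl _
      · exact reach_trans ⟨.cons e (.nil _)⟩ (reach_of_mem_vertices p h)

lemma simOne_symm {a b : V} (h : G.SimOne a b) : G.SimOne b a := by
  rcases h with h | ⟨h1, h2⟩ | ⟨w, hw, h1, h2⟩
  · exact Or.inl h.symm
  · exact Or.inr (Or.inl ⟨h1.symm, fun w hw => h2 w hw.symm⟩)
  · exact Or.inr (Or.inr ⟨w, hw, h2, h1⟩)

lemma sim_symm {a b : V} (h : G.Sim a b) : G.Sim b a := by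
  induction h with
  | single h => exact .single (simOne_symm h)
  | tail _ h ih => exact .trans (.single (simOne_symm h)) ih

/-- Any point of `P` is `∼¹`-related to everything it reaches. -/
lemma simOne_of_mem_P {w : V} (hw : w ∈ G.Pl ∪ G.Pc ∪ G.Pec) {y : V}
    (h : G.Reach w y) : G.SimOne w y := by
  rcases hw with (hw | hw) | hw
  · refine Or.inr (Or.inl ⟨Or.inl h, fun z hz => ?_⟩)
    rcases hz with hz | hz
    · exact (hw z hz).1
    · exact (hw z (reach_trans h hz)).1
  · rcases hw with ⟨b, p, hc, _, hmem⟩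
    exact Or.inr (Or.inr ⟨b, ⟨p, hc⟩, reach_of_mem_vertices p hmem,
      reach_trans (reach_of_mem_vertices p hmem) h⟩)
  · rcases hw with ⟨b, p, hc, hmem⟩
    exact Or.inr (Or.inr ⟨b, ⟨p, hc.1⟩, reach_of_mem_vertices p hmem,
      reach_trans (reach_of_mem_vertices p hmem) h⟩)

/-- `x` is good if it is `∼`-related to everything it reaches. -/
def Good (G : DGraph V E) (x : V) : Prop := ∀ y, G.Reach x y → G.Sim x y

lemma good_step {x x' : V} (h : G.SimOne x x') (hx : Good G x) : Good G x' := by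
  rcases h with rfl | ⟨_, h2⟩ | ⟨w, hw, _, hwx'⟩
  · exact hx
  · intro y hy
    refine .single (Or.inr (Or.inl ⟨Or.inl hy, fun z hz => h2 z ?_⟩))
    rcases hz with hz | hz
    · exact Or.inr hz
    · exact Or.inr (reach_trans hy hz)
  · intro y hy
    exact .single (Or.inr (Or.inr ⟨w, hw, hwx', reach_trans hwx' hy⟩))

lemma good_of_sim {u x : V} (hu : u ∈ G.Pl ∪ G.Pc ∪ G.Pec) (h : G.Sim u x) :
    Good G x := by
  induction h with
  | single h => exact good_step h (fun y hy => .single (simOne_of_mem_P hu hy))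
  | tail _ h ih => exact good_step h ih

lemma classOf_her {u : V} (hu : u ∈ G.Pl ∪ G.Pc ∪ G.Pec) :
    G.Hereditary (G.classOf u) := by
  intro x y hxy hx
  exact Relation.TransGen.trans hx (good_of_sim hu hx y hxy)

lemma reach_mem_of_lam {H : Set V} :
    ∀ (n : ℕ) {x : V}, x ∈ G.Lam H n → ∃ b ∈ H, G.Reach x b
  | 0, x, hx => ⟨x, hx, reach_refl x⟩
  | n+1, x, hx => by
      rcases hx with hx | ⟨⟨_, e, he⟩, hr⟩
      · exact reach_mem_of_lam n hx
      · obtain ⟨b, hb, hrb⟩ := reach_mem_of_lam n (hr e he)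
        exact ⟨b, hb, reach_trans ⟨he ▸ GPath.cons e (.nil _)⟩ hrb⟩

lemma sim_of_lam {u v : V} (hu : u ∈ G.Pl ∪ G.Pc ∪ G.Pec)
    (hv : v ∈ G.Pl ∪ G.Pc ∪ G.Pec) :
    ∀ (n : ℕ) {x b : V}, x ∈ G.Lam (G.classOf u) n → G.GPath x b →
      G.Sim v b → G.Sim u v := by
  intro n
  induction n with
  | zero =>
    intro x b hx p hb
    have hub : G.Sim u b := Relation.TransGen.trans hx (good_of_sim hu hx b ⟨p⟩)
    exact hub.trans (sim_symm hb)
  | succ n ih =>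
    intro x b hx p hb
    rcases hx with hx | ⟨⟨_, e, he⟩, hr⟩
    · exact ih hx p hb
    · cases p with
      | nil =>
        have hre : G.r e ∈ G.classOf v :=
          classOf_her hv ⟨he ▸ GPath.cons e (.nil _)⟩ hb
        exact ih (hr e he) (.nil _) hre
      | cons f q =>
        exact ih (hr f rfl) q hb

end DGraph

/-- for `u, v ∈ P = P_l ∪ P_c ∪ P_ec`, the class `[u]` under the
connection relation `∼` is hereditary, and if `u ≁ v` then the saturated
closures of `[u]` and `[v]` are disjoint. -/
theorem classOf_hereditary_and_disjoint {V E : Type} (G : DGraph V E)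
    (u v : V) (hu : u ∈ G.Pl ∪ G.Pc ∪ G.Pec) (hv : v ∈ G.Pl ∪ G.Pc ∪ G.Pec) :
    G.Hereditary (G.classOf u) ∧
    (¬G.Sim u v → G.satClosure (G.classOf u) ∩ G.satClosure (G.classOf v) = ∅) := by
  refine ⟨DGraph.classOf_her hu, fun hne => ?_⟩
  rw [Set.eq_empty_iff_forall_notMem]
  rintro x ⟨hxu, hxv⟩
  obtain ⟨n, hn⟩ := Set.mem_iUnion.mp hxu
  obtain ⟨m, hm⟩ := Set.mem_iUnion.mp hxv
  obtain ⟨b, hb, ⟨p⟩⟩ := DGraph.reach_mem_of_lam m hm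
  exact hne (DGraph.sim_of_lam hu hv n hn p hb)
end
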